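/- The rational-tree unification algorithm terminates on all inputs: for every equation system Ξ and all finite trees t₁, t₂, the computation of unify_Ξ(t₁, t₂) terminates (producing either an equation system or a failure ⊥). The proof is by well-founded induction on the maximum of the heights of the two input trees, using that the height of every right-hand side stored in the equation system is at most one and that unification of two variables terminates. -/
import Mathlib


namespace RT

/-- The polynomial functor whose greatest fixed point is the set `T^∞` of
possibly infinite trees over variables `ℕ` and constructors `ℕ` with arities `ar`. -/
def TreeP (ar : ℕ → ℕ) : PFunctor :=
  ⟨ℕ ⊕ ℕ, fun a =>
    match a with
    | Sum.inl _ => Fin 0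
    | Sum.inr f => Fin (ar f)⟩

/-- Possibly infinite trees: the greatest fixed point of `T ::= 𝕍 | ℂⁿ(T₁,…,Tₙ)`. -/
def InfTree (ar : ℕ → ℕ) : Type := (TreeP ar).M

/-- A variable leaf as a possibly infinite tree. -/
def varLeaf (ar : ℕ → ℕ) (x : ℕ) : InfTree ar :=
  PFunctor.M.mk ⟨Sum.inl x, Fin.elim0⟩

/-- A constant (nullary constructor application) as a possibly infinite tree. -/
def constLeaf (ar : ℕ → ℕ) (f : ℕ) (hf : ar f = 0) : InfTree ar :=
  PFunctor.M.mk ⟨Sum.inr f, fun i => absurd i.isLt (by omega)⟩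

/-- The subtree relation on possibly infinite trees, generated by
`t ∈ subtrees(t)` and `t ∈ subtrees(tᵢ) → t ∈ subtrees(fⁿ(…,tᵢ,…))`. -/
inductive Subtree (ar : ℕ → ℕ) : InfTree ar → InfTree ar → Prop
  | refl (t : InfTree ar) : Subtree ar t t
  | step (s t : InfTree ar) (i : (TreeP ar).B (PFunctor.M.dest t).1) :
      Subtree ar s ((PFunctor.M.dest t).2 i) → Subtree ar s t

/-- A rational tree is a possibly infinite tree with finitely many subtrees. -/
def IsRational {ar : ℕ → ℕ} (r : InfTree ar) : Prop :=
  {s | Subtree ar s r}.Finite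

/-- The label (variable `Sum.inl x` or constructor `Sum.inr f`) of a possibly
infinite tree at a given path, if the path is valid. -/
def InfTree.labelAt {ar : ℕ → ℕ} : List ℕ → InfTree ar → Option (ℕ ⊕ ℕ)
  | [], t => some (PFunctor.M.dest t).1
  | i :: p, t =>
      match PFunctor.M.dest t with
      | ⟨Sum.inl _, _⟩ => none
      | ⟨Sum.inr f, ch⟩ => if h : i < ar f then InfTree.labelAt p (ch ⟨i, h⟩) else none

/-- μ-trees: the least fixed point of `T^μ ::= 𝕍 | ℂⁿ(T^μ₁,…,T^μₙ) | μ𝕍. T^μ`. -/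
inductive MuTree (ar : ℕ → ℕ) : Type
  | var : ℕ → MuTree ar
  | cons : (f : ℕ) → (Fin (ar f) → MuTree ar) → MuTree ar
  | mu : ℕ → MuTree ar → MuTree ar

namespace MuTree

variable {ar : ℕ → ℕ}

/-- Size of a μ-tree. -/
def size : MuTree ar → ℕ
  | .var _ => 1
  | .cons _ args => 1 + ∑ i, (args i).size
  | .mu _ t => 1 + t.size

/-- Free variables of a μ-tree (μ binds its variable). -/
def freeVars : MuTree ar → Finset ℕ
  | .var x => {x}
  | .cons _ args => Finset.univ.sup fun i => (args i).freeVars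
  | .mu x t => t.freeVars.erase x

/-- A variable fresh for a given finite set of variables. -/
def freshVar (s : Finset ℕ) : ℕ := s.sup id + 1

/-- Renaming of a free variable (to a fresh one, when used for α-conversion). -/
def rename : MuTree ar → ℕ → ℕ → MuTree ar
  | .var y, x, z => if y = x then .var z else .var y
  | .cons f args, x, z => .cons f fun i => (args i).rename x z
  | .mu y t, x, z => if y = x then .mu y t else .mu y (t.rename x z)

lemma size_pos (t : MuTree ar) : 0 < t.size := by
  cases t <;> simp [size]

lemma size_rename (t : MuTree ar) (x z : ℕ) : (t.rename x z).size = t.size := by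
  induction t with
  | var y => by_cases h : y = x <;> simp [rename, size, h]
  | cons f args ih => simp [rename, size, ih]
  | mu y t ih => by_cases h : y = x <;> simp [rename, size, h, ih]

lemma size_arg_lt {f : ℕ} (args : Fin (ar f) → MuTree ar) (i : Fin (ar f)) :
    (args i).size < (MuTree.cons f args).size := by
  have h : (args i).size ≤ ∑ j, (args j).size :=
    Finset.single_le_sum (f := fun j => (args j).size) (fun j _ => Nat.zero_le _)
      (Finset.mem_univ i)
  simp only [size]; omega

/-- Capture-avoiding substitution `t[x ↦ s]` on μ-trees. -/
def subst : MuTree ar → ℕ → MuTree ar → MuTree ar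
  | .var y, x, s => if y = x then s else .var y
  | .cons f args, x, s => .cons f fun i => (args i).subst x s
  | .mu y t, x, s =>
      if y = x then .mu y t
      else
        let z := freshVar (s.freeVars ∪ t.freeVars ∪ {x, y})
        .mu z ((t.rename y z).subst x s)
  termination_by t _ _ => t.size
  decreasing_by
  · exact size_arg_lt args i
  · simp [size_rename, size]

/-- The unfolding step `→_μ` : performs `μx. t →_μ t[x ↦ μx. t]` at all
top-level occurrences of μ-binders (homomorphic extension). -/
def unfoldStep : MuTree ar → MuTree ar
  | .var x => .var x
  | .cons f args => .cons f fun i => (args i).unfoldStep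
  | .mu x t => t.subst x (.mu x t)

/-- The label of a μ-tree at a path: `none` at (or below) a not-yet-unfolded μ-binder. -/
def labelAt : MuTree ar → List ℕ → Option (ℕ ⊕ ℕ)
  | .var x, [] => some (Sum.inl x)
  | .var _, _ :: _ => none
  | .cons f _, [] => some (Sum.inr f)
  | .cons _ args, i :: p => if h : i < ar _ then (args ⟨i, h⟩).labelAt p else none
  | .mu _ _, _ => none

/-- Well-formedness of μ-trees: a μ-binder may only be applied directly to a
constructor application. -/
inductive Wf : MuTree ar → Prop
  | var (x : ℕ) : Wf (.var x)
  | cons (f : ℕ) (args : Fin (ar f) → MuTree ar) : (∀ i, Wf (args i)) → Wf (.cons f args)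
  | mu (x f : ℕ) (args : Fin (ar f) → MuTree ar) :
      Wf (.cons f args) → Wf (.mu x (.cons f args))

end MuTree

/-- Syntactic subterms of a μ-tree. -/
inductive MuSub {ar : ℕ → ℕ} : MuTree ar → MuTree ar → Prop
  | refl (t : MuTree ar) : MuSub t t
  | cons (s : MuTree ar) (f : ℕ) (args : Fin (ar f) → MuTree ar) (i : Fin (ar f)) :
      MuSub s (args i) → MuSub s (.cons f args)
  | mu (s : MuTree ar) (x : ℕ) (t : MuTree ar) : MuSub s t → MuSub s (.mu x t)

/-- `UnfoldsTo t r`: the possibly infinite tree `r` is the limit of the iterated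
unfolding steps applied to the μ-tree `t`: the label of the `n`-th unfolding at
every path eventually stabilizes to the label of `r` at that path. -/
def UnfoldsTo {ar : ℕ → ℕ} (t : MuTree ar) (r : InfTree ar) : Prop :=
  ∀ p : List ℕ, ∃ N : ℕ, ∀ n ≥ N, (MuTree.unfoldStep^[n] t).labelAt p = InfTree.labelAt p r

end RT

namespace RT
end RT

namespace RT

variable {ar : ℕ → ℕ}

/-- Finite trees: the least fixed point of `T ::= 𝕍 | ℂⁿ(T₁,…,Tₙ)`. -/
inductive FTree (ar : ℕ → ℕ) : Type
  | var : ℕ → FTree ar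
  | cons : (f : ℕ) → (Fin (ar f) → FTree ar) → FTree ar

/-- Height of a finite tree: `0` for a variable, one plus the maximum height
of the arguments for a constructor application. -/
def FTree.height : FTree ar → ℕ
  | .var _ => 0
  | .cons _ args => 1 + Finset.univ.sup fun i => (args i).height

/-- Variables occurring in a finite tree. -/
def FTree.vars : FTree ar → Finset ℕ
  | .var x => {x}
  | .cons _ args => Finset.univ.sup fun i => (args i).vars

/-- A head tree: a constructor applied to variables. -/
structure HeadTree (ar : ℕ → ℕ) where
  f : ℕ
  args : Fin (ar f) → ℕ

noncomputable instance : DecidableEq (HeadTree ar) := Classical.decEq _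

/-- A head tree as a finite tree. -/
def HeadTree.toFTree (h : HeadTree ar) : FTree ar := .cons h.f fun i => .var (h.args i)

/-- Variables of a head tree. -/
def HeadTree.vars (h : HeadTree ar) : Finset ℕ := Finset.univ.image h.args

/-- An equation `X ≡ v, t`: a set of variables, a representing variable, and an
optional head tree. -/
structure Equation (ar : ℕ → ℕ) where
  lhs : Finset ℕ
  rep : ℕ
  rhs : Option (HeadTree ar)

noncomputable instance : DecidableEq (Equation ar) := Classical.decEq _

/-- The invariant of a single equation: a non-empty left-hand side containing
the representing variable. -/
def Equation.Wf (e : Equation ar) : Prop := e.lhs.Nonempty ∧ e.rep ∈ e.lhs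

/-- All variables of an equation. -/
noncomputable def Equation.vars (e : Equation ar) : Finset ℕ :=
  e.lhs ∪ (e.rhs.elim ∅ HeadTree.vars)

/-- An equation system: a finite set of equations. -/
abbrev EqSystem (ar : ℕ → ℕ) := Finset (Equation ar)

/-- The invariants of an equation system: well-formed equations with pairwise
disjoint left-hand sides. -/
def SystemWf (Ξ : EqSystem ar) : Prop :=
  (∀ e ∈ Ξ, e.Wf) ∧ ∀ e₁ ∈ Ξ, ∀ e₂ ∈ Ξ, e₁ ≠ e₂ → Disjoint e₁.lhs e₂.lhs

/-- The domain of an equation system: the union of the left-hand sides. -/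
noncomputable def domSys (Ξ : EqSystem ar) : Finset ℕ := Ξ.biUnion Equation.lhs

/-- All variables of an equation system. -/
noncomputable def sysVars (Ξ : EqSystem ar) : Finset ℕ := Ξ.biUnion Equation.vars

/-- The equation of the system containing the given variable, if any. -/
noncomputable def findEq (Ξ : EqSystem ar) (x : ℕ) : Option (Equation ar) :=
  if h : ∃ e ∈ Ξ, x ∈ e.lhs then some h.choose else none

/-- `find`: lookup of a variable, returning the representing variable and the
optional head tree of its equation. -/
noncomputable def find (Ξ : EqSystem ar) (x : ℕ) : ℕ × Option (HeadTree ar) :=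
  match findEq Ξ x with
  | none => (x, none)
  | some e => (e.rep, e.rhs)

/-- A root of an equation system: a variable `x` with `find Ξ x = (x, t)`. -/
def IsRoot (Ξ : EqSystem ar) (x : ℕ) : Prop := (find Ξ x).1 = x

/-- The roots of an equation system lying in its domain. -/
noncomputable def rootSet (Ξ : EqSystem ar) : Finset ℕ :=
  (domSys Ξ).filter fun x => (find Ξ x).1 = x

/-- Adding an equation to a system replaces all equations whose left-hand sides
intersect that of the added equation. -/
noncomputable def addEq (Ξ : EqSystem ar) (e : Equation ar) : EqSystem ar :=
  insert e (Ξ.filter fun e' => Disjoint e'.lhs e.lhs)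

/-- `bind`: binds the given variable('s equation) to the given head tree. -/
noncomputable def bindVar (Ξ : EqSystem ar) (x : ℕ) (t : HeadTree ar) : EqSystem ar :=
  match findEq Ξ x with
  | none => addEq Ξ ⟨{x}, x, some t⟩
  | some e => addEq Ξ ⟨e.lhs, e.rep, some t⟩

/-- `union`: merges the equivalence classes of the two given variables,
optionally returning the pair of head trees bound to them before the union
if both existed. -/
noncomputable def unionVar (Ξ : EqSystem ar) (x y : ℕ) :
    EqSystem ar × Option (HeadTree ar × HeadTree ar) :=
  if x = y then (Ξ, none)
  else
    match findEq Ξ x, findEq Ξ y with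
    | none, none => (addEq Ξ ⟨{x, y}, x, none⟩, none)
    | some e, none => (addEq Ξ ⟨insert y e.lhs, e.rep, e.rhs⟩, none)
    | none, some e => (addEq Ξ ⟨insert x e.lhs, e.rep, e.rhs⟩, none)
    | some e₁, some e₂ =>
        if e₁ = e₂ then (Ξ, none)
        else
          (addEq Ξ ⟨e₁.lhs ∪ e₂.lhs, e₁.rep, e₁.rhs⟩,
           match e₁.rhs, e₂.rhs with
           | some t₁, some t₂ => some (t₁, t₂)
           | _, _ => none)

end RT
namespace RT

variable {ar : ℕ → ℕ}

/-- One coinductive step for `image`: the label and child variables of the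
image of a variable. -/
noncomputable def imageStep (Ξ : EqSystem ar) (x : ℕ) : (TreeP ar).Obj ℕ :=
  match findEq Ξ x with
  | none => ⟨Sum.inl x, Fin.elim0⟩
  | some e =>
      match e.rhs with
      | none => ⟨Sum.inl e.rep, Fin.elim0⟩
      | some h => ⟨Sum.inr h.f, h.args⟩

/-- The image `image_Ξ : 𝕍 → T^∞` of an equation system, defined coinductively:
`image_Ξ(x) = x` if `x ∉ dom(Ξ)`; `image_Ξ(x) = y` if `[X ≡ y, ⊥] ∈ Ξ, x ∈ X`;
`image_Ξ(x) = fⁿ(image_Ξ(x₁),…,image_Ξ(xₙ))` if `[X ≡ y, fⁿ(x₁,…,xₙ)] ∈ Ξ, x ∈ X`. -/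
noncomputable def image (Ξ : EqSystem ar) : ℕ → InfTree ar :=
  PFunctor.M.corec (imageStep Ξ)

/-- One coinductive step for substitution into a possibly infinite tree; the
boolean records whether we are still inside the original tree. -/
noncomputable def substInfStep (σ : ℕ → InfTree ar) :
    Bool × InfTree ar → (TreeP ar).Obj (Bool × InfTree ar) := fun p =>
  match p with
  | (false, t) => ⟨(PFunctor.M.dest t).1, fun i => (false, (PFunctor.M.dest t).2 i)⟩
  | (true, t) =>
      match PFunctor.M.dest t with
      | ⟨Sum.inl x, _⟩ =>
          ⟨(PFunctor.M.dest (σ x)).1, fun i => (false, (PFunctor.M.dest (σ x)).2 i)⟩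
      | ⟨Sum.inr f, ch⟩ => ⟨Sum.inr f, fun i => (true, ch i)⟩

/-- Application of a substitution (a map from variables to possibly infinite
trees) to a possibly infinite tree. -/
noncomputable def substInf (σ : ℕ → InfTree ar) (t : InfTree ar) : InfTree ar :=
  PFunctor.M.corec (substInfStep σ) (true, t)

/-- Application of a substitution to a finite tree (homomorphic extension). -/
noncomputable def applySubst (σ : ℕ → InfTree ar) : FTree ar → InfTree ar
  | .var x => σ x
  | .cons f args => PFunctor.M.mk ⟨Sum.inr f, fun i => applySubst σ (args i)⟩

mutual
  /-- The rational-tree unification algorithm, as a big-step inference system: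
  `Unify Ξ t₁ t₂ res` means the computation of `unify_Ξ(t₁, t₂)` terminates with
  result `res` (`some Ξ'` on success, `none` on failure). -/
  inductive Unify : EqSystem ar → FTree ar → FTree ar → Option (EqSystem ar) → Prop
    | u1 {Ξ Ξ' : EqSystem ar} {x y : ℕ} :
        unionVar Ξ x y = (Ξ', none) → Unify Ξ (.var x) (.var y) (some Ξ')
    | u2 {Ξ Ξ' : EqSystem ar} {x y : ℕ} {t₁ t₂ : HeadTree ar} {res} :
        unionVar Ξ x y = (Ξ', some (t₁, t₂)) →
        Unify Ξ' t₁.toFTree t₂.toFTree res → Unify Ξ (.var x) (.var y) res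
    | varConsBound {Ξ : EqSystem ar} {x x' : ℕ} {h : HeadTree ar} {f : ℕ}
        {args : Fin (ar f) → FTree ar} {res} :
        find Ξ x = (x', some h) →
        Unify Ξ h.toFTree (.cons f args) res → Unify Ξ (.var x) (.cons f args) res
    | varConsUnbound {Ξ : EqSystem ar} {x x' : ℕ} {f : ℕ}
        {args : Fin (ar f) → FTree ar} {res} (ys : Fin (ar f) → ℕ) :
        find Ξ x = (x', none) →
        Function.Injective ys →
        (∀ i, ys i ∉ sysVars Ξ ∪ insert x (FTree.cons f args).vars) →
        UnifySeq (bindVar Ξ x' ⟨f, ys⟩) (List.ofFn fun i => (FTree.var (ys i), args i)) res →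
        Unify Ξ (.var x) (.cons f args) res
    | consVarBound {Ξ : EqSystem ar} {x x' : ℕ} {h : HeadTree ar} {f : ℕ}
        {args : Fin (ar f) → FTree ar} {res} :
        find Ξ x = (x', some h) →
        Unify Ξ (.cons f args) h.toFTree res → Unify Ξ (.cons f args) (.var x) res
    | consVarUnbound {Ξ : EqSystem ar} {x x' : ℕ} {f : ℕ}
        {args : Fin (ar f) → FTree ar} {res} (ys : Fin (ar f) → ℕ) :
        find Ξ x = (x', none) →
        Function.Injective ys →
        (∀ i, ys i ∉ sysVars Ξ ∪ insert x (FTree.cons f args).vars) →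
        UnifySeq (bindVar Ξ x' ⟨f, ys⟩) (List.ofFn fun i => (FTree.var (ys i), args i)) res →
        Unify Ξ (.cons f args) (.var x) res
    | consCons {Ξ : EqSystem ar} {f : ℕ} {args₁ args₂ : Fin (ar f) → FTree ar} {res} :
        UnifySeq Ξ (List.ofFn fun i => (args₁ i, args₂ i)) res →
        Unify Ξ (.cons f args₁) (.cons f args₂) res
    | clash {Ξ : EqSystem ar} {f g : ℕ} {args₁ : Fin (ar f) → FTree ar}
        {args₂ : Fin (ar g) → FTree ar} :
        f ≠ g → Unify Ξ (.cons f args₁) (.cons g args₂) none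

  /-- Sequential unification of a list of pairs of trees, threading the
  equation system and propagating failure. -/
  inductive UnifySeq : EqSystem ar → List (FTree ar × FTree ar) → Option (EqSystem ar) → Prop
    | nil {Ξ : EqSystem ar} : UnifySeq Ξ [] (some Ξ)
    | consFail {Ξ : EqSystem ar} {t₁ t₂ : FTree ar} {rest} :
        Unify Ξ t₁ t₂ none → UnifySeq Ξ ((t₁, t₂) :: rest) none
    | consOk {Ξ Ξ' : EqSystem ar} {t₁ t₂ : FTree ar} {rest} {res} :
        Unify Ξ t₁ t₂ (some Ξ') → UnifySeq Ξ' rest res → UnifySeq Ξ ((t₁, t₂) :: rest) res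
end

/-- The μ-image procedure `μ-image_Ξ(x, vis)`, as an inference system threading
the partial `visited` mapping (`none` = not encountered, `some false` =
encountered once, `some true` = encountered multiple times). -/
inductive MuImage (Ξ : EqSystem ar) : ℕ → (ℕ → Option Bool) → MuTree ar → (ℕ → Option Bool) → Prop
  | noImage {x : ℕ} {vis : ℕ → Option Bool} :
      (∀ e ∈ Ξ, x ∉ e.lhs) → MuImage Ξ x vis (.var x) vis
  | noTree {x : ℕ} {vis : ℕ → Option Bool} {e : Equation ar} :
      e ∈ Ξ → x ∈ e.lhs → e.rhs = none → MuImage Ξ x vis (.var e.rep) vis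
  | varCase {x : ℕ} {vis : ℕ → Option Bool} {e : Equation ar} {h : HeadTree ar} :
      e ∈ Ξ → x ∈ e.lhs → e.rhs = some h → vis e.rep ≠ none →
      MuImage Ξ x vis (.var e.rep) (Function.update vis e.rep (some true))
  | treeCase {x : ℕ} {vis : ℕ → Option Bool} {e : Equation ar} {h : HeadTree ar}
      (ts : Fin (ar h.f) → MuTree ar) (viss : Fin (ar h.f + 1) → ℕ → Option Bool) :
      e ∈ Ξ → x ∈ e.lhs → e.rhs = some h → vis e.rep = none →
      viss 0 = Function.update vis e.rep (some false) →
      (∀ i : Fin (ar h.f), MuImage Ξ (h.args i) (viss i.castSucc) (ts i) (viss i.succ)) →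
      viss (Fin.last (ar h.f)) e.rep = some false →
      MuImage Ξ x vis (.cons h.f ts)
        (Function.update (viss (Fin.last (ar h.f))) e.rep none)
  | muCase {x : ℕ} {vis : ℕ → Option Bool} {e : Equation ar} {h : HeadTree ar}
      (ts : Fin (ar h.f) → MuTree ar) (viss : Fin (ar h.f + 1) → ℕ → Option Bool) :
      e ∈ Ξ → x ∈ e.lhs → e.rhs = some h → vis e.rep = none →
      viss 0 = Function.update vis e.rep (some false) →
      (∀ i : Fin (ar h.f), MuImage Ξ (h.args i) (viss i.castSucc) (ts i) (viss i.succ)) →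
      viss (Fin.last (ar h.f)) e.rep = some true →
      MuImage Ξ x vis (.mu e.rep (.cons h.f ts))
        (Function.update (viss (Fin.last (ar h.f))) e.rep none)

end RT

namespace RT

variable {ar : ℕ → ℕ}

/-- Number of bound equations (equations with a head tree on the right). -/
noncomputable def boundCount (Ξ : EqSystem ar) : ℕ :=
  (Ξ.filter fun e => e.rhs.isSome).card

lemma boundCount_mono {Ξ₁ Ξ₂ : EqSystem ar} (h : Ξ₁ ⊆ Ξ₂) :
    boundCount Ξ₁ ≤ boundCount Ξ₂ :=
  Finset.card_le_card (Finset.filter_subset_filter _ h)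

lemma boundCount_insert_le (Ξ : EqSystem ar) (e : Equation ar) :
    boundCount (insert e Ξ) ≤ boundCount Ξ + 1 := by
  unfold boundCount
  rw [Finset.filter_insert]
  split
  · exact Finset.card_insert_le _ _
  · omega

lemma boundCount_insert_unbound (Ξ : EqSystem ar) {e : Equation ar} (he : e.rhs = none) :
    boundCount (insert e Ξ) = boundCount Ξ := by
  unfold boundCount
  rw [Finset.filter_insert]
  simp [he]

lemma boundCount_erase {Ξ : EqSystem ar} {e : Equation ar} (he : e ∈ Ξ)
    (hb : e.rhs.isSome) :
    boundCount (Ξ.erase e) + 1 = boundCount Ξ := by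
  unfold boundCount
  rw [Finset.filter_erase]
  exact Finset.card_erase_add_one (Finset.mem_filter.2 ⟨he, hb⟩)

lemma findEq_spec {Ξ : EqSystem ar} {x : ℕ} {e : Equation ar}
    (h : findEq Ξ x = some e) : e ∈ Ξ ∧ x ∈ e.lhs := by
  unfold findEq at h
  split at h
  · next hex =>
      injection h with h
      exact h ▸ hex.choose_spec
  · exact absurd h (by simp)
lemma unionVar_boundCount {Ξ Ξ' : EqSystem ar} {x y : ℕ} {o}
    (h : unionVar Ξ x y = (Ξ', o)) :
    boundCount Ξ' ≤ boundCount Ξ ∧ (o.isSome → boundCount Ξ' < boundCount Ξ) := by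
  unfold unionVar at h
  split at h
  · -- x = y
    cases h; simp
  split at h
  · -- none, none
    rename_i h1 h2
    cases h
    refine ⟨?_, by simp⟩
    unfold addEq
    rw [boundCount_insert_unbound _ rfl]
    exact boundCount_mono (Finset.filter_subset _ _)
  · -- some e, none
    rename_i e h1 h2
    cases h
    obtain ⟨heΞ, hex⟩ := findEq_spec h1
    refine ⟨?_, by simp⟩
    unfold addEq
    have hsub : (Ξ.filter fun e' =>
        Disjoint e'.lhs (Equation.lhs ⟨insert y e.lhs, e.rep, e.rhs⟩)) ⊆ Ξ.erase e := by
      intro e' he'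
      rw [Finset.mem_filter] at he'
      rw [Finset.mem_erase]
      refine ⟨?_, he'.1⟩
      rintro rfl
      exact (Finset.disjoint_left.1 he'.2 hex) (Finset.mem_insert_of_mem hex)
    rcases hb : e.rhs with _ | t
    · rw [boundCount_insert_unbound _ rfl]
      exact boundCount_mono (Finset.filter_subset _ _)
    · calc boundCount _ ≤ _ + 1 := boundCount_insert_le _ _
        _ ≤ boundCount (Ξ.erase e) + 1 := by
            exact Nat.add_le_add_right (boundCount_mono hsub) 1
        _ = boundCount Ξ := boundCount_erase heΞ (by simp [hb])
  · -- none, some e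
    rename_i e h1 h2
    cases h
    obtain ⟨heΞ, hey⟩ := findEq_spec h2
    refine ⟨?_, by simp⟩
    unfold addEq
    have hsub : (Ξ.filter fun e' =>
        Disjoint e'.lhs (Equation.lhs ⟨insert x e.lhs, e.rep, e.rhs⟩)) ⊆ Ξ.erase e := by
      intro e' he'
      rw [Finset.mem_filter] at he'
      rw [Finset.mem_erase]
      refine ⟨?_, he'.1⟩
      rintro rfl
      exact (Finset.disjoint_left.1 he'.2 hey) (Finset.mem_insert_of_mem hey)
    rcases hb : e.rhs with _ | t
    · rw [boundCount_insert_unbound _ rfl]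
      exact boundCount_mono (Finset.filter_subset _ _)
    · calc boundCount _ ≤ _ + 1 := boundCount_insert_le _ _
        _ ≤ boundCount (Ξ.erase e) + 1 := Nat.add_le_add_right (boundCount_mono hsub) 1
        _ = boundCount Ξ := boundCount_erase heΞ (by simp [hb])
  · -- some e₁, some e₂
    rename_i e₁ e₂ h1 h2
    split at h
    · cases h; simp
    rename_i hne
    obtain ⟨he₁Ξ, hex⟩ := findEq_spec h1
    obtain ⟨he₂Ξ, hey⟩ := findEq_spec h2
    cases h
    have hsub : ∀ r : Option (HeadTree ar), (Ξ.filter fun e' =>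
        Disjoint e'.lhs (Equation.lhs ⟨e₁.lhs ∪ e₂.lhs, e₁.rep, r⟩)) ⊆
        (Ξ.erase e₁).erase e₂ := by
      intro r e' he'
      rw [Finset.mem_filter] at he'
      rw [Finset.mem_erase, Finset.mem_erase]
      refine ⟨?_, ?_, he'.1⟩
      · rintro rfl
        exact (Finset.disjoint_left.1 he'.2 hey) (Finset.mem_union_right _ hey)
      · rintro rfl
        exact (Finset.disjoint_left.1 he'.2 hex) (Finset.mem_union_left _ hex)
    rcases hb1 : e₁.rhs with _ | t₁
    · refine ⟨?_, by cases e₂.rhs <;> simp⟩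
      unfold addEq
      rw [boundCount_insert_unbound _ rfl]
      exact boundCount_mono (Finset.filter_subset _ _)
    rcases hb2 : e₂.rhs with _ | t₂
    · refine ⟨?_, by simp⟩
      unfold addEq
      calc boundCount _ ≤ _ + 1 := boundCount_insert_le _ _
        _ ≤ boundCount (Ξ.erase e₁) + 1 := Nat.add_le_add_right
            (boundCount_mono ((hsub _).trans (Finset.erase_subset _ _))) 1
        _ = boundCount Ξ := boundCount_erase he₁Ξ (by simp [hb1])
    · have he₂e : e₂ ∈ Ξ.erase e₁ := Finset.mem_erase.2 ⟨fun h => hne h.symm, he₂Ξ⟩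
      have k1 : boundCount ((Ξ.erase e₁).erase e₂) + 1 = boundCount (Ξ.erase e₁) :=
        boundCount_erase he₂e (by simp [hb2])
      have k2 : boundCount (Ξ.erase e₁) + 1 = boundCount Ξ :=
        boundCount_erase he₁Ξ (by simp [hb1])
      have hle : boundCount (addEq Ξ ⟨e₁.lhs ∪ e₂.lhs, e₁.rep, some t₁⟩) <
          boundCount Ξ := by
        unfold addEq
        calc boundCount _ ≤ _ + 1 := boundCount_insert_le _ _
          _ ≤ boundCount ((Ξ.erase e₁).erase e₂) + 1 :=
              Nat.add_le_add_right (boundCount_mono (hsub _)) 1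
          _ < boundCount Ξ := by omega
      exact ⟨hle.le, fun _ => hle⟩
/-- Totality of unification of two variables, with a bound-count estimate,
by strong induction on the number of bound equations. -/
lemma unify_var_var : ∀ (n : ℕ) (Ξ : EqSystem ar), boundCount Ξ ≤ n → ∀ x y : ℕ,
    ∃ res, Unify Ξ (.var x) (.var y) res ∧
      ∀ Ξ'', res = some Ξ'' → boundCount Ξ'' ≤ boundCount Ξ := by
  intro n
  induction n using Nat.strong_induction_on with
  | _ n ih =>
    intro Ξ hΞn x y
    rcases hu : unionVar Ξ x y with ⟨Ξ', o⟩
    obtain ⟨hle, hlt⟩ := unionVar_boundCount hu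
    rcases o with _ | ⟨t₁, t₂⟩
    · exact ⟨some Ξ', Unify.u1 hu, by rintro Ξ'' ⟨rfl⟩; exact hle⟩
    have hlt' : boundCount Ξ' < boundCount Ξ := hlt (by simp)
    -- sequential unification of lists of variable pairs below measure n
    have seq : ∀ (l : List (ℕ × ℕ)) (Θ : EqSystem ar), boundCount Θ < n →
        ∃ res, UnifySeq Θ (l.map fun p => (FTree.var p.1, FTree.var p.2)) res ∧
          ∀ Ξ'', res = some Ξ'' → boundCount Ξ'' ≤ boundCount Θ := by
      intro l
      induction l with
      | nil => exact fun Θ _ => ⟨some Θ, UnifySeq.nil, by rintro Ξ'' ⟨rfl⟩; exact le_rfl⟩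
      | cons p rest ihl =>
        intro Θ hΘ
        obtain ⟨res, hres, hbnd⟩ := ih (boundCount Θ) hΘ Θ le_rfl p.1 p.2
        rcases res with _ | Θ'
        · exact ⟨none, UnifySeq.consFail hres, by rintro Ξ'' ⟨⟩⟩
        · have hΘ' : boundCount Θ' ≤ boundCount Θ := hbnd Θ' rfl
          obtain ⟨res2, hres2, hbnd2⟩ := ihl Θ' (lt_of_le_of_lt hΘ' hΘ)
          exact ⟨res2, UnifySeq.consOk hres hres2,
            fun Ξ'' h'' => le_trans (hbnd2 Ξ'' h'') hΘ'⟩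
    rcases t₁ with ⟨f₁, a₁⟩
    rcases t₂ with ⟨f₂, a₂⟩
    by_cases hf : f₁ = f₂
    · subst hf
      have hn' : boundCount Ξ' < n := lt_of_lt_of_le hlt' hΞn
      obtain ⟨res, hres, hbnd⟩ := seq (List.ofFn fun i => (a₁ i, a₂ i)) Ξ' hn'
      rw [List.map_ofFn] at hres
      refine ⟨res, Unify.u2 hu (Unify.consCons hres), ?_⟩
      intro Ξ'' h''
      exact le_trans (le_trans (hbnd Ξ'' h'') hlt'.le) le_rfl
    · exact ⟨none, Unify.u2 hu (Unify.clash hf), by rintro Ξ'' ⟨⟩⟩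
/-- Totality of sequential unification, given totality for each pair. -/
lemma unifySeq_total : ∀ (l : List (FTree ar × FTree ar)),
    (∀ p ∈ l, ∀ Θ : EqSystem ar, ∃ res, Unify Θ p.1 p.2 res) →
    ∀ Θ : EqSystem ar, ∃ res, UnifySeq Θ l res := by
  intro l
  induction l with
  | nil => exact fun _ Θ => ⟨some Θ, UnifySeq.nil⟩
  | cons p rest ihl =>
    rcases p with ⟨t₁, t₂⟩
    intro H Θ
    obtain ⟨res, hres⟩ := H (t₁, t₂) (by simp) Θ
    rcases res with _ | Θ'
    · exact ⟨none, UnifySeq.consFail hres⟩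
    · obtain ⟨res2, hres2⟩ := ihl (fun q hq => H q (List.mem_cons_of_mem _ hq)) Θ'
      exact ⟨res2, UnifySeq.consOk hres hres2⟩

/-- A supply of fresh, injective variables avoiding a finite set. -/
lemma fresh_supply (s : Finset ℕ) (m : ℕ) :
    ∃ ys : Fin m → ℕ, Function.Injective ys ∧ ∀ i, ys i ∉ s := by
  refine ⟨fun i => s.sup id + 1 + i.val, ?_, ?_⟩
  · intro i j hij
    apply Fin.ext
    dsimp only at hij
    omega
  · intro i hmem
    have := Finset.le_sup (f := id) hmem
    simp only [id] at this
    omega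

/-- Totality of unification, by strong induction on the maximum height. -/
lemma unify_total : ∀ (n : ℕ) (Ξ : EqSystem ar) (t₁ t₂ : FTree ar),
    max t₁.height t₂.height ≤ n → ∃ res, Unify Ξ t₁ t₂ res := by
  intro n
  induction n using Nat.strong_induction_on with
  | _ n ih =>
    intro Ξ t₁ t₂ hh
    have argsmall : ∀ {f : ℕ} (args : Fin (ar f) → FTree ar),
        FTree.height (.cons f args) ≤ n → ∀ i : Fin (ar f),
          (args i).height < n := by
      intro f args hle i
      have hsup : (args i).height ≤ Finset.univ.sup fun j => (args j).height :=
        Finset.le_sup (f := fun j => (args j).height) (Finset.mem_univ i)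
      simp only [FTree.height] at hle
      omega
    cases t₁ with
    | var x =>
      cases t₂ with
      | var y =>
        obtain ⟨res, hres, _⟩ := unify_var_var (boundCount Ξ) Ξ le_rfl x y
        exact ⟨res, hres⟩
      | cons f args =>
        have hcons : FTree.height (.cons f args) ≤ n := le_trans (le_max_right _ _) hh
        have hpairs : ∀ (zs : Fin (ar f) → ℕ) (Θ : EqSystem ar),
            ∃ res, UnifySeq Θ (List.ofFn fun i => (FTree.var (zs i), args i)) res := by
          intro zs Θ
          refine unifySeq_total _ ?_ Θ
          intro p hp Θ'
          rw [List.mem_ofFn] at hp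
          obtain ⟨i, hi⟩ := hp
          subst hi
          exact ih _ (argsmall args hcons i) Θ' _ _
            (by simp [FTree.height, le_of_lt (argsmall args hcons i)])
        rcases hfind : find Ξ x with ⟨x', o⟩
        rcases o with _ | h
        · -- unbound: bind fresh head tree
          obtain ⟨ys, hinj, hys⟩ :=
            fresh_supply (sysVars Ξ ∪ insert x (FTree.cons f args).vars) (ar f)
          obtain ⟨res, hres⟩ := hpairs ys (bindVar Ξ x' ⟨f, ys⟩)
          exact ⟨res, Unify.varConsUnbound ys hfind hinj hys hres⟩
        · -- bound: unify the head tree against the constructor tree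
          by_cases hf : h.f = f
          · obtain ⟨e1, args1⟩ := h
            dsimp only at hf
            subst hf
            obtain ⟨res, hres⟩ := hpairs args1 Ξ
            exact ⟨res, Unify.varConsBound hfind (Unify.consCons hres)⟩
          · exact ⟨none, Unify.varConsBound hfind (Unify.clash hf)⟩
    | cons f args =>
      cases t₂ with
      | var x =>
        have hcons : FTree.height (.cons f args) ≤ n := le_trans (le_max_left _ _) hh
        rcases hfind : find Ξ x with ⟨x', o⟩
        rcases o with _ | h
        · obtain ⟨ys, hinj, hys⟩ :=
            fresh_supply (sysVars Ξ ∪ insert x (FTree.cons f args).vars) (ar f)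
          have hpairs : ∃ res, UnifySeq (bindVar Ξ x' ⟨f, ys⟩)
              (List.ofFn fun i => (FTree.var (ys i), args i)) res := by
            refine unifySeq_total _ ?_ _
            intro p hp Θ'
            rw [List.mem_ofFn] at hp
            obtain ⟨i, hi⟩ := hp
            subst hi
            exact ih _ (argsmall args hcons i) Θ' _ _
              (by simp [FTree.height, le_of_lt (argsmall args hcons i)])
          obtain ⟨res, hres⟩ := hpairs
          exact ⟨res, Unify.consVarUnbound ys hfind hinj hys hres⟩
        · by_cases hf : f = h.f
          · obtain ⟨e1, args1⟩ := h
            dsimp only at hf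
            subst hf
            have hpairs : ∃ res, UnifySeq Ξ
                (List.ofFn fun i => (args i, FTree.var (args1 i))) res := by
              refine unifySeq_total _ ?_ _
              intro p hp Θ'
              rw [List.mem_ofFn] at hp
              obtain ⟨i, hi⟩ := hp
              subst hi
              exact ih _ (argsmall args hcons i) Θ' _ _
                (by simp [FTree.height, le_of_lt (argsmall args hcons i)])
            obtain ⟨res, hres⟩ := hpairs
            exact ⟨res, Unify.consVarBound hfind (Unify.consCons hres)⟩
          · exact ⟨none, Unify.consVarBound hfind (Unify.clash hf)⟩
      | cons g args₂ =>
        have hc1 : FTree.height (.cons f args) ≤ n := le_trans (le_max_left _ _) hh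
        have hc2 : FTree.height (.cons g args₂) ≤ n := le_trans (le_max_right _ _) hh
        by_cases hf : f = g
        · subst hf
          have hpairs : ∃ res, UnifySeq Ξ
              (List.ofFn fun i => (args i, args₂ i)) res := by
            refine unifySeq_total _ ?_ _
            intro p hp Θ'
            rw [List.mem_ofFn] at hp
            obtain ⟨i, hi⟩ := hp
            subst hi
            refine ih (max (args i).height ((args₂ i).height)) ?_ Θ' _ _ le_rfl
            exact max_lt (argsmall args hc1 i) (argsmall args₂ hc2 i)
          obtain ⟨res, hres⟩ := hpairs
          exact ⟨res, Unify.consCons hres⟩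
        · exact ⟨none, Unify.clash hf⟩

/-- The rational-tree unification algorithm terminates on all
inputs: for every equation system `Ξ` and finite trees `t₁`, `t₂`, the
computation of `unify_Ξ(t₁, t₂)` terminates, producing either an equation
system or a failure `⊥`. -/
theorem unify_terminates (ar : ℕ → ℕ) (Ξ : EqSystem ar) (hΞ : SystemWf Ξ)
    (t₁ t₂ : FTree ar) :
    ∃ res : Option (EqSystem ar), Unify Ξ t₁ t₂ res := by
  exact unify_total (max t₁.height t₂.height) Ξ t₁ t₂ le_rfl

end RT
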